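/- arXiv:1806.08892 — 5 statements merged into one kernel-verified Lean document; each statement's English description precedes it below -/
import Mathlib

section
/- Let L be an irreducible N×N matrix with nonnegative off-diagonal entries, zero row sums and rank N−1, and let ε > 0. Let L̃ be obtained from L by subtracting ε from the (1,1) entry. Then L̃ is nonsingular and every eigenvalue of L̃ has negative real part. -/
open Matrix Finset

lemma triangle_eq_aux {ι : Type*} (s : Finset ι) (a : ι → ℝ) (ha : ∀ j ∈ s, 0 ≤ a j)
    (w : ι → ℂ) (z : ℂ) (hw : ∀ j ∈ s, ‖w j‖ ≤ ‖z‖)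
    (hsum : ∑ j ∈ s, (a j : ℂ) * w j = (↑(∑ j ∈ s, a j) : ℂ) * z) :
    ∀ k ∈ s, 0 < a k → w k = z := by
  have key : ∀ j ∈ s, a j * (w j * (starRingEnd ℂ) z).re ≤ a j * Complex.normSq z := by
    intro j hj
    apply mul_le_mul_of_nonneg_left _ (ha j hj)
    calc (w j * (starRingEnd ℂ) z).re ≤ ‖w j * (starRingEnd ℂ) z‖ :=
          Complex.re_le_norm _
      _ = ‖w j‖ * ‖z‖ := by rw [norm_mul, Complex.norm_conj]
      _ ≤ ‖z‖ * ‖z‖ :=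
          mul_le_mul_of_nonneg_right (hw j hj) (norm_nonneg _)
      _ = Complex.normSq z := by rw [← Complex.sq_norm, sq]
  have hsum' : ∑ j ∈ s, a j * (w j * (starRingEnd ℂ) z).re
      = ∑ j ∈ s, a j * Complex.normSq z := by
    have := congrArg (fun t => (t * (starRingEnd ℂ) z).re) hsum
    simp only [Finset.sum_mul, mul_assoc] at this
    rw [Complex.re_sum] at this
    simp only [Complex.re_ofReal_mul] at this
    rw [this, Complex.mul_conj, Complex.ofReal_re, ← Finset.sum_mul]
  have heach := (Finset.sum_eq_sum_iff_of_le key).mp hsum'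
  intro k hk hak
  have h1 : (w k * (starRingEnd ℂ) z).re = Complex.normSq z :=
    mul_left_cancel₀ (ne_of_gt hak) (heach k hk)
  have h2 : Complex.normSq (w k) ≤ Complex.normSq z := by
    rw [← Complex.sq_norm, ← Complex.sq_norm]
    exact pow_le_pow_left₀ (norm_nonneg _) (hw k hk) 2
  have h3 : Complex.normSq (w k - z) ≤ 0 := by
    rw [Complex.normSq_sub, h1]; linarith
  have h4 := Complex.normSq_nonneg (w k - z)
  exact sub_eq_zero.mp (Complex.normSq_eq_zero.mp (le_antisymm h3 h4))

lemma key_lemma {N : ℕ} (hN : 0 < N) (L : Matrix (Fin N) (Fin N) ℝ)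
    (hoff : ∀ i j, i ≠ j → 0 ≤ L i j)
    (hrow : ∀ i, ∑ j, L i j = 0)
    (hirr : ∀ i j : Fin N,
      Relation.ReflTransGen (fun a b : Fin N => a ≠ b ∧ 0 < L b a) i j)
    (ε : ℝ) (hε : 0 < ε)
    (lam : ℂ) (v : Fin N → ℂ) (hv : v ≠ 0)
    (heig : ((L - Matrix.single (⟨0, hN⟩ : Fin N) (⟨0, hN⟩ : Fin N) ε).map Complex.ofReal).mulVec v
      = lam • v) :
    lam.re < 0 := by
  set z : Fin N := ⟨0, hN⟩ with hz
  set R : Fin N → ℝ := fun i => ∑ j ∈ univ.erase i, L i j with hRdef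
  have hRnonneg : ∀ i, 0 ≤ R i := by
    intro i
    exact Finset.sum_nonneg fun j hj => hoff i j (Ne.symm (Finset.ne_of_mem_erase hj))
  have hLdiag : ∀ i, L i i = -R i := by
    intro i
    have := Finset.sum_erase_add univ (L i) (mem_univ i)
    rw [hrow i] at this
    simp only [hRdef]; linarith
  -- row equations
  have heq : ∀ i, ∑ j ∈ univ.erase i, (L i j : ℂ) * v j
      = (lam - ((L i i : ℂ) - (if i = z then (ε : ℂ) else 0))) * v i := by
    intro i
    have h := congrFun heig i
    simp only [Matrix.mulVec, dotProduct, Pi.smul_apply, smul_eq_mul] at h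
    rw [← Finset.sum_erase_add _ _ (mem_univ i)] at h
    have h1 : ∀ j ∈ univ.erase i,
        ((L - Matrix.single z z ε).map Complex.ofReal) i j * v j
        = (L i j : ℂ) * v j := by
      intro j hj
      have hji : j ≠ i := Finset.ne_of_mem_erase hj
      have : ¬(z = i ∧ z = j) := by rintro ⟨rfl, rfl⟩; exact hji rfl
      simp [Matrix.map_apply, Matrix.sub_apply, Matrix.single, this]
    rw [Finset.sum_congr rfl h1] at h
    have h2 : ((L - Matrix.single z z ε).map Complex.ofReal) i i
        = (L i i : ℂ) - (if i = z then (ε : ℂ) else 0) := by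
      by_cases hiz : i = z
      · subst hiz; simp [Matrix.map_apply, Matrix.sub_apply, Matrix.single]
      · simp [Matrix.map_apply, Matrix.sub_apply, Matrix.single, hiz,
          (Ne.symm hiz : z ≠ i)]
    rw [h2] at h
    linear_combination h
  -- triangle inequality bound
  have habs : ∀ i, (∀ j, ‖v j‖ ≤ ‖v i‖) →
      ‖(lam - ((L i i : ℂ) - (if i = z then (ε : ℂ) else 0))) * v i‖
        ≤ R i * ‖v i‖ := by
    intro i hmax
    rw [← heq i]
    calc ‖∑ j ∈ univ.erase i, (L i j : ℂ) * v j‖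
        ≤ ∑ j ∈ univ.erase i, ‖(L i j : ℂ) * v j‖ := norm_sum_le _ _
      _ ≤ ∑ j ∈ univ.erase i, L i j * ‖v i‖ := by
          apply Finset.sum_le_sum
          intro j hj
          rw [norm_mul, Complex.norm_real,
            Real.norm_of_nonneg (hoff i j (Ne.symm (Finset.ne_of_mem_erase hj)))]
          exact mul_le_mul_of_nonneg_left (hmax j)
            (hoff i j (Ne.symm (Finset.ne_of_mem_erase hj)))
      _ = R i * ‖v i‖ := by rw [← Finset.sum_mul]
  -- lower bound on |lam - diag|
  by_contra hcon
  push_neg at hcon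
  have hlow : ∀ i, R i + (if i = z then ε else 0)
      ≤ ‖lam - ((L i i : ℂ) - (if i = z then (ε : ℂ) else 0))‖ := by
    intro i
    have hre : (lam - ((L i i : ℂ) - (if i = z then (ε : ℂ) else 0))).re
        = lam.re + R i + (if i = z then ε else 0) := by
      rw [hLdiag i]
      simp [Complex.sub_re, Complex.ofReal_re, apply_ite Complex.re]
      ring
    calc R i + (if i = z then ε else 0) ≤ lam.re + R i + (if i = z then ε else 0) := by
          linarith
      _ = _ := hre.symm
      _ ≤ _ := Complex.re_le_norm _
  obtain ⟨k, hk⟩ := Function.ne_iff.mp hv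
  obtain ⟨i0, -, hi0⟩ := Finset.exists_max_image Finset.univ
    (fun j => ‖v j‖) ⟨k, mem_univ k⟩
  have hi0' : ∀ j, ‖v j‖ ≤ ‖v i0‖ := fun j => hi0 j (mem_univ j)
  have hm : 0 < ‖v i0‖ :=
    lt_of_lt_of_le (norm_pos_iff.mpr hk) (hi0' k)
  -- contradiction if the max is attained at z
  have hzero_at : (∀ j, ‖v j‖ ≤ ‖v z‖) → False := by
    intro hmaxz
    have h1 := habs z hmaxz
    have h2 := hlow z
    rw [if_pos rfl] at h2
    rw [norm_mul] at h1
    have hvz : 0 < ‖v z‖ := lt_of_lt_of_le hm (hmaxz i0)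
    nlinarith [mul_le_mul_of_nonneg_right h2 (le_of_lt hvz)]
  by_cases hi0z : i0 = z
  · exact hzero_at (hi0z ▸ hi0')
  · -- lam = 0
    have h1 := habs i0 hi0'
    have h2 := hlow i0
    rw [if_neg hi0z] at h1 h2
    rw [norm_mul] at h1
    rw [add_zero] at h2
    have hble : ‖lam - ((L i0 i0 : ℂ) - 0)‖ ≤ R i0 :=
      le_of_mul_le_mul_right (by nlinarith) hm
    have hsq : (lam.re + R i0) ^ 2 + lam.im ^ 2 ≤ (R i0) ^ 2 := by
      have := pow_le_pow_left₀ (norm_nonneg _) hble 2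
      rw [Complex.sq_norm, Complex.normSq_apply] at this
      simp only [Complex.sub_re, Complex.sub_im, Complex.ofReal_re, Complex.ofReal_im,
        Complex.zero_re, Complex.zero_im, hLdiag i0] at this
      nlinarith [this]
    have hlam0 : lam = 0 := by
      have hre : lam.re = 0 := by nlinarith [hRnonneg i0]
      have him : lam.im = 0 := by nlinarith [hRnonneg i0]
      exact Complex.ext hre him
    subst hlam0
    -- propagation
    have hprop : ∀ i, i ≠ z → (∀ j, ‖v j‖ ≤ ‖v i‖) →
        ∀ k, k ≠ i → 0 < L i k → v k = v i := by
      intro i hiz hmax k hki hLik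
      refine triangle_eq_aux (univ.erase i) (L i)
        (fun j hj => hoff i j (Ne.symm (Finset.ne_of_mem_erase hj))) v (v i)
        (fun j _ => hmax j) ?_ k (Finset.mem_erase.mpr ⟨hki, mem_univ k⟩) hLik
      have := heq i
      rw [if_neg hiz] at this
      rw [this, hLdiag i]
      simp only [hRdef]
      push_cast
      ring
    have hchain : ∀ j, Relation.ReflTransGen (fun a b : Fin N => a ≠ b ∧ 0 < L b a) z j →
        v j = v i0 → v z = v i0 := by
      intro j hj
      induction hj with
      | refl => exact fun h => h
      | @tail b c hzb hbc ih =>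
        intro hc
        by_cases hcz : c = z
        · rw [← hcz]; exact hc
        · have hmaxc : ∀ j, ‖v j‖ ≤ ‖v c‖ := by
            rw [hc]; exact hi0'
          have hb : v b = v c := hprop c hcz hmaxc b hbc.1 hbc.2
          exact ih (hb.trans hc)
    have hvz : v z = v i0 := hchain i0 (hirr z i0) rfl
    exact hzero_at (by rw [hvz]; exact hi0')

/-- Let `L` be an irreducible `N × N` matrix with nonnegative off-diagonal
entries, zero row sums and rank `N - 1`, and `ε > 0`.  Then
`L̃ = L - ε e₁ e₁ᵀ` is nonsingular and every eigenvalue of `L̃` has negative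
real part. -/
theorem pinned_laplacian_nonsingular_eigenvalues_neg
    {N : ℕ} (hN : 0 < N) (L : Matrix (Fin N) (Fin N) ℝ)
    (hoff : ∀ i j, i ≠ j → 0 ≤ L i j)
    (hrow : ∀ i, ∑ j, L i j = 0)
    (hrank : L.rank = N - 1)
    (hirr : ∀ i j : Fin N,
      Relation.ReflTransGen (fun a b : Fin N => a ≠ b ∧ 0 < L b a) i j)
    (ε : ℝ) (hε : 0 < ε)
    (Lt : Matrix (Fin N) (Fin N) ℝ)
    (hLt : Lt = L - Matrix.single ⟨0, hN⟩ ⟨0, hN⟩ ε) :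
    Lt.det ≠ 0 ∧
    ∀ (lam : ℂ) (v : Fin N → ℂ), v ≠ 0 →
      (Lt.map (Complex.ofReal)).mulVec v = lam • v → lam.re < 0 := by
  have hpart2 : ∀ (lam : ℂ) (v : Fin N → ℂ), v ≠ 0 →
      (Lt.map (Complex.ofReal)).mulVec v = lam • v → lam.re < 0 := by
    intro lam v hv heig
    subst hLt
    exact key_lemma hN L hoff hrow hirr ε hε lam v hv heig
  refine ⟨?_, hpart2⟩
  intro hdet
  have hdetC : (Lt.map Complex.ofReal).det = 0 := by
    have h := RingHom.map_det Complex.ofRealHom Lt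
    rw [hdet, RingHom.mapMatrix_apply] at h
    exact (by simpa using h.symm : (Lt.map Complex.ofRealHom).det = 0)
  obtain ⟨w, hw0, hww⟩ := Matrix.exists_mulVec_eq_zero_iff.mpr hdetC
  have hlt := hpart2 0 w hw0 (by rw [hww, zero_smul])
  simp at hlt
end

section
/- Let L be an irreducible N×N matrix with nonnegative off-diagonal entries and zero row sums, with positive left null vector ξ, and let Ξ = diag(ξ_1,…,ξ_N). For ε > 0 let L̃ = L − ε e_1 e_1ᵀ. Then the symmetric matrix (Ξ L̃ + L̃ᵀ Ξ)/2 is negative definite. -/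
open Matrix

/-- Let `L` be an irreducible matrix with nonnegative off-diagonal entries and
zero row sums, with positive normalized left null vector `ξ`, `Ξ = diag ξ`, and
`L̃ = L - ε e₁ e₁ᵀ` with `ε > 0`.  Then `(Ξ L̃ + L̃ᵀ Ξ)/2` is negative
definite. -/
theorem pinned_weighted_symmetric_part_negdef
    {N : ℕ} (hN : 0 < N) (L : Matrix (Fin N) (Fin N) ℝ)
    (hoff : ∀ i j, i ≠ j → 0 ≤ L i j)
    (hrow : ∀ i, ∑ j, L i j = 0)
    (hirr : ∀ i j : Fin N,
      Relation.ReflTransGen (fun a b : Fin N => a ≠ b ∧ 0 < L b a) i j)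
    (ξ : Fin N → ℝ) (hξpos : ∀ i, 0 < ξ i)
    (hξ : Matrix.vecMul ξ L = 0) (hsum : ∑ i, ξ i = 1)
    (ε : ℝ) (hε : 0 < ε)
    (Lt : Matrix (Fin N) (Fin N) ℝ)
    (hLt : Lt = L - Matrix.single ⟨0, hN⟩ ⟨0, hN⟩ ε)
    (Ξ : Matrix (Fin N) (Fin N) ℝ) (hΞ : Ξ = Matrix.diagonal ξ) :
    ∀ x : Fin N → ℝ, x ≠ 0 →
      x ⬝ᵥ (((1 : ℝ) / 2) • (Ξ * Lt + Ltᵀ * Ξ)).mulVec x < 0 := by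
  intro x hx
  set e : Fin N := ⟨0, hN⟩ with he
  set M : Matrix (Fin N) (Fin N) ℝ := Ξ * Lt with hM
  -- the second summand is the transpose of the first
  have htr : Ltᵀ * Ξ = Mᵀ := by
    rw [hM, Matrix.transpose_mul, hΞ, Matrix.diagonal_transpose]
  -- quadratic form of transpose equals that of the matrix
  have hsymm : x ⬝ᵥ Mᵀ.mulVec x = x ⬝ᵥ M.mulVec x := by
    rw [Matrix.mulVec_transpose, dotProduct_comm, Matrix.dotProduct_mulVec]
  have hhalf : x ⬝ᵥ (((1 : ℝ) / 2) • (Ξ * Lt + Ltᵀ * Ξ)).mulVec x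
      = x ⬝ᵥ M.mulVec x := by
    rw [htr, Matrix.smul_mulVec, Matrix.add_mulVec, dotProduct_smul,
      dotProduct_add, hsymm, smul_eq_mul]
    rw [hM]
    ring
  rw [hhalf]
  -- entrywise description of M
  have hMapp : ∀ i j, M i j = ξ i * L i j -
      ξ i * (if e = i ∧ e = j then ε else 0) := by
    intro i j
    rw [hM, hΞ, hLt]
    simp [Matrix.diagonal_mul, Matrix.sub_apply, Matrix.single,
      mul_sub]
  -- the pinned part
  have hstd : ∑ i, ∑ j, (ξ i * if e = i ∧ e = j then ε else 0) * (x i * x j)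
      = ε * ξ e * (x e * x e) := by
    have hone : ∀ i, ∑ j, (ξ i * if e = i ∧ e = j then ε else 0) * (x i * x j)
        = if e = i then ε * ξ i * (x i * x e) else 0 := by
      intro i
      by_cases h : e = i
      · subst h
        rw [Finset.sum_eq_single e]
        · rw [if_pos ⟨rfl, rfl⟩, if_pos rfl]; ring
        · intro b _ hb
          have : e ≠ b := Ne.symm hb
          simp [this]
        · simp
      · simp [h]
    simp only [hone]
    rw [Finset.sum_eq_single e]
    · simp
    · intro b _ hb
      have : e ≠ b := Ne.symm hb
      simp [this]
    · simp
  -- the quadratic form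
  have hq : x ⬝ᵥ M.mulVec x
      = (∑ i, ∑ j, ξ i * L i j * (x i * x j)) - ε * ξ e * (x e * x e) := by
    have h0 : x ⬝ᵥ M.mulVec x = ∑ i, ∑ j, M i j * (x i * x j) := by
      simp only [dotProduct, Matrix.mulVec, Finset.mul_sum]
      exact Finset.sum_congr rfl fun i _ => Finset.sum_congr rfl fun j _ => by
        ring
    rw [h0]
    have hsplit : ∀ i j, M i j * (x i * x j)
        = ξ i * L i j * (x i * x j)
          - (ξ i * if e = i ∧ e = j then ε else 0) * (x i * x j) := by
      intro i j; rw [hMapp]; ring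
    simp only [hsplit, Finset.sum_sub_distrib]
    rw [hstd]
  -- the sum of squares representation
  set T : ℝ := ∑ i, ∑ j, ξ i * L i j * (x i - x j) ^ 2 with hT
  have hcol : ∀ j, ∑ i, ξ i * L i j = 0 := by
    intro j
    have := congrFun hξ j
    simpa [Matrix.vecMul, dotProduct] using this
  have hTS : T = -2 * ∑ i, ∑ j, ξ i * L i j * (x i * x j) := by
    have hexp : ∀ i j, ξ i * L i j * (x i - x j) ^ 2
        = ξ i * L i j * (x i * x i) - 2 * (ξ i * L i j * (x i * x j))
          + ξ i * L i j * (x j * x j) := by intros; ring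
    rw [hT]
    simp only [hexp, Finset.sum_add_distrib, Finset.sum_sub_distrib]
    have h1 : ∑ i, ∑ j, ξ i * L i j * (x i * x i) = 0 := by
      apply Finset.sum_eq_zero
      intro i _
      have : ∑ j, ξ i * L i j * (x i * x i)
          = (ξ i * (x i * x i)) * ∑ j, L i j := by
        rw [Finset.mul_sum]
        exact Finset.sum_congr rfl fun j _ => by ring
      rw [this, hrow i, mul_zero]
    have h3 : ∑ i, ∑ j, ξ i * L i j * (x j * x j) = 0 := by
      rw [Finset.sum_comm]
      apply Finset.sum_eq_zero
      intro j _
      have : ∑ i, ξ i * L i j * (x j * x j)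
          = (x j * x j) * ∑ i, ξ i * L i j := by
        rw [Finset.mul_sum]
        exact Finset.sum_congr rfl fun i _ => by ring
      rw [this, hcol j, mul_zero]
    have h2 : ∑ i, ∑ j, 2 * (ξ i * L i j * (x i * x j))
        = 2 * ∑ i, ∑ j, ξ i * L i j * (x i * x j) := by
      rw [Finset.mul_sum]
      exact Finset.sum_congr rfl fun i _ => (Finset.mul_sum _ _ _).symm
    rw [h1, h3, h2]
    ring
  -- each term of T is nonnegative
  have hTterm : ∀ i j, 0 ≤ ξ i * L i j * (x i - x j) ^ 2 := by
    intro i j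
    rcases eq_or_ne i j with rfl | hij
    · simp
    · exact mul_nonneg (mul_nonneg (hξpos i).le (hoff i j hij)) (sq_nonneg _)
  have hTnn : 0 ≤ T :=
    Finset.sum_nonneg fun i _ => Finset.sum_nonneg fun j _ => hTterm i j
  -- final value
  have hval : x ⬝ᵥ M.mulVec x = -(1 / 2) * T - ε * ξ e * (x e * x e) := by
    rw [hq]
    have : ∑ i, ∑ j, ξ i * L i j * (x i * x j) = -(1 / 2) * T := by
      rw [hTS]; ring
    rw [this]
  rw [hval]
  -- nonpositivity, with strictness by contradiction
  by_contra hcon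
  push_neg at hcon
  have hpξ : 0 < ε * ξ e := mul_pos hε (hξpos e)
  have hxe2 : 0 ≤ ε * ξ e * (x e * x e) :=
    mul_nonneg hpξ.le (mul_self_nonneg _)
  have hT0 : T = 0 := by nlinarith
  have hxe0 : x e = 0 := by
    have h : ε * ξ e * (x e * x e) = 0 := by nlinarith
    have := mul_eq_zero.mp h
    rcases this with h' | h'
    · exact absurd h' (ne_of_gt hpξ)
    · exact mul_self_eq_zero.mp h'
  -- all terms of T vanish
  have hterm0 : ∀ i j, ξ i * L i j * (x i - x j) ^ 2 = 0 := by
    have houter : ∀ i ∈ Finset.univ, (∑ j, ξ i * L i j * (x i - x j) ^ 2) = 0 := by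
      rw [← Finset.sum_eq_zero_iff_of_nonneg
        (fun i _ => Finset.sum_nonneg fun j _ => hTterm i j)]
      exact hT0.symm ▸ rfl
    intro i j
    have hinner := (Finset.sum_eq_zero_iff_of_nonneg
      (fun j _ => hTterm i j)).mp (houter i (Finset.mem_univ i))
    exact hinner j (Finset.mem_univ j)
  -- propagate x = 0 along the irreducibility chains
  have hchain : ∀ j, x j = x e := by
    intro j
    induction hirr e j with
    | refl => rfl
    | @tail b c hab hbc ih =>
      obtain ⟨hne, hpos⟩ := hbc
      have h0 := hterm0 c b
      have hpos' : 0 < ξ c * L c b := mul_pos (hξpos c) hpos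
      have hsq : (x c - x b) ^ 2 = 0 := by
        rcases mul_eq_zero.mp h0 with h' | h'
        · exact absurd h' (ne_of_gt hpos')
        · exact h'
      have hxcb : x c = x b := by
        have := pow_eq_zero_iff (n := 2) (by norm_num) |>.mp hsq
        linarith [sub_eq_zero.mp this]
      rw [hxcb, ih]
  exact hx (funext fun j => by rw [hchain j, hxe0, Pi.zero_apply])
end

section
/- Let L be an N×N matrix with nonnegative off-diagonal entries, zero row sums, rank N−1, left null vector ξ with ξ_i ≥ 0, ∑ξ_i = 1, and Ξ = diag(ξ). Then the symmetric matrix (ΞL + LᵀΞ)/2 has all eigenvalues ≤ 0, it annihilates the vector (1,…,1)ᵀ, and it is negative semidefinite with kernel containing span{(1,…,1)ᵀ}. -/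
open Matrix

/-- For `L` with nonnegative off-diagonal entries, zero row sums, rank `N - 1`,
normalized nonnegative left null vector `ξ` and `Ξ = diag ξ`, the symmetric
matrix `(Ξ L + Lᵀ Ξ)/2` annihilates the all-ones vector and is negative
semidefinite (hence all its eigenvalues are `≤ 0` and its kernel contains the
span of the all-ones vector). -/
theorem weighted_symmetric_part_negsemidef
    {N : ℕ} (L : Matrix (Fin N) (Fin N) ℝ)
    (hoff : ∀ i j, i ≠ j → 0 ≤ L i j)
    (hrow : ∀ i, ∑ j, L i j = 0)
    (hrank : L.rank = N - 1)
    (ξ : Fin N → ℝ) (hξnn : ∀ i, 0 ≤ ξ i)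
    (hξ : Matrix.vecMul ξ L = 0) (hsum : ∑ i, ξ i = 1)
    (Ξ : Matrix (Fin N) (Fin N) ℝ) (hΞ : Ξ = Matrix.diagonal ξ) :
    (((1 : ℝ) / 2) • (Ξ * L + Lᵀ * Ξ)).mulVec (fun _ => (1 : ℝ)) = 0 ∧
    ∀ x : Fin N → ℝ,
      x ⬝ᵥ (((1 : ℝ) / 2) • (Ξ * L + Lᵀ * Ξ)).mulVec x ≤ 0 := by
  subst hΞ
  have hcol : ∀ j, ∑ i, ξ i * L i j = 0 := by
    intro j
    have := congrFun hξ j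
    simpa [Matrix.vecMul, dotProduct] using this
  constructor
  · have h1 : L.mulVec (fun _ => (1 : ℝ)) = 0 := by
      funext i
      simp [Matrix.mulVec, dotProduct, hrow i]
    have h2 : Lᵀ.mulVec ξ = 0 := by
      rw [Matrix.mulVec_transpose]; exact hξ
    have hd : (Matrix.diagonal ξ).mulVec (fun _ => (1 : ℝ)) = ξ := by
      funext i
      simp [Matrix.mulVec_diagonal]
    rw [Matrix.smul_mulVec, Matrix.add_mulVec, ← Matrix.mulVec_mulVec,
      ← Matrix.mulVec_mulVec, h1, hd, h2, Matrix.mulVec_zero, add_zero, smul_zero]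
  · intro x
    set S : ℝ := ∑ i, ∑ j, ξ i * L i j * x i * x j with hS
    have hq : x ⬝ᵥ (((1 : ℝ) / 2) • (Matrix.diagonal ξ * L + Lᵀ * Matrix.diagonal ξ)).mulVec x
        = S := by
      have hM : ∀ i j, (((1 : ℝ) / 2) • (Matrix.diagonal ξ * L + Lᵀ * Matrix.diagonal ξ)) i j
          = (1 / 2) * (ξ i * L i j + L j i * ξ j) := by
        intro i j
        simp [Matrix.diagonal_mul, Matrix.mul_diagonal, Matrix.transpose_apply]
      calc x ⬝ᵥ (((1 : ℝ) / 2) • (Matrix.diagonal ξ * L + Lᵀ * Matrix.diagonal ξ)).mulVec x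
          = ∑ i, ∑ j, x i * ((((1 : ℝ) / 2) • (Matrix.diagonal ξ * L + Lᵀ * Matrix.diagonal ξ)) i j * x j) := by
            simp [dotProduct, Matrix.mulVec, Finset.mul_sum]
        _ = ∑ i, ∑ j, ((1 / 2) * (ξ i * L i j * x i * x j) + (1 / 2) * (L j i * ξ j * x i * x j)) := by
            refine Finset.sum_congr rfl fun i _ => Finset.sum_congr rfl fun j _ => ?_
            rw [hM i j]; ring
        _ = (∑ i, ∑ j, (1 / 2) * (ξ i * L i j * x i * x j))
            + (∑ i, ∑ j, (1 / 2) * (L j i * ξ j * x i * x j)) := by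
            rw [← Finset.sum_add_distrib]
            exact Finset.sum_congr rfl fun i _ => Finset.sum_add_distrib
        _ = (∑ i, ∑ j, (1 / 2) * (ξ i * L i j * x i * x j))
            + (∑ j, ∑ i, (1 / 2) * (L j i * ξ j * x i * x j)) := by
            congr 1
            exact Finset.sum_comm
        _ = S := by
            rw [hS, ← Finset.sum_add_distrib]
            refine Finset.sum_congr rfl fun i _ => ?_
            rw [← Finset.sum_add_distrib]
            refine Finset.sum_congr rfl fun j _ => by ring
    have hzero1 : ∑ i, ∑ j, ξ i * L i j * x i ^ 2 = 0 := by
      refine Finset.sum_eq_zero fun i _ => ?_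
      calc ∑ j, ξ i * L i j * x i ^ 2 = ξ i * x i ^ 2 * ∑ j, L i j := by
            rw [Finset.mul_sum]
            exact Finset.sum_congr rfl fun j _ => by ring
        _ = 0 := by rw [hrow i, mul_zero]
    have hzero2 : ∑ j, ∑ i, ξ i * L i j * x j ^ 2 = 0 := by
      refine Finset.sum_eq_zero fun j _ => ?_
      calc ∑ i, ξ i * L i j * x j ^ 2 = x j ^ 2 * ∑ i, ξ i * L i j := by
            rw [Finset.mul_sum]
            exact Finset.sum_congr rfl fun i _ => by ring
        _ = 0 := by rw [hcol j, mul_zero]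
    set T : ℝ := ∑ i, ∑ j, ξ i * L i j * (x i - x j) ^ 2 with hT
    have hTnonneg : 0 ≤ T := by
      refine Finset.sum_nonneg fun i _ => Finset.sum_nonneg fun j _ => ?_
      rcases eq_or_ne i j with h | h
      · subst h; simp
      · exact mul_nonneg (mul_nonneg (hξnn i) (hoff i j h)) (sq_nonneg _)
    have hTS : T + 2 * S = (∑ i, ∑ j, ξ i * L i j * x i ^ 2)
        + ∑ i, ∑ j, ξ i * L i j * x j ^ 2 := by
      rw [hT, hS, Finset.mul_sum, ← Finset.sum_add_distrib, ← Finset.sum_add_distrib]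
      refine Finset.sum_congr rfl fun i _ => ?_
      rw [Finset.mul_sum, ← Finset.sum_add_distrib, ← Finset.sum_add_distrib]
      exact Finset.sum_congr rfl fun j _ => by ring
    have hswap : ∑ i, ∑ j, ξ i * L i j * x j ^ 2 = 0 := by
      rw [Finset.sum_comm]; exact hzero2
    rw [hzero1, hswap] at hTS
    rw [hq]
    linarith
end

section
/- Let A ∈ R^{n×n}, C ∈ R^{q×n}, and suppose (A,C) is detectable in the sense that the observability Gramian W(t) = ∫₀ᵗ e^{−Aᵀs} CᵀC e^{−As} ds is positive definite for some t > 0. Then there exists a symmetric positive definite matrix P and ε > 0 with PA + AᵀP − 2CᵀC ≤ −ε I. -/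
open Matrix NormedSpace intervalIntegral

variable {n q : ℕ}

noncomputable def Mf (A : Matrix (Fin n) (Fin n) ℝ) (C : Matrix (Fin q) (Fin n) ℝ) (s : ℝ) :
    Matrix (Fin n) (Fin n) ℝ :=
  exp ((-s) • Aᵀ) * (Cᵀ * C) * exp ((-s) • A)

lemma hasDerivAt_Mf_entry (A : Matrix (Fin n) (Fin n) ℝ) (C : Matrix (Fin q) (Fin n) ℝ)
    (s : ℝ) (i j : Fin n) :
    HasDerivAt (fun s => Mf A C s i j) ((-(Aᵀ * Mf A C s + Mf A C s * A)) i j) s := by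
  letI : SeminormedRing (Matrix (Fin n) (Fin n) ℝ) := Matrix.linftyOpSemiNormedRing
  letI : NormedRing (Matrix (Fin n) (Fin n) ℝ) := Matrix.linftyOpNormedRing
  letI : NormedAlgebra ℝ (Matrix (Fin n) (Fin n) ℝ) := Matrix.linftyOpNormedAlgebra
  have hneg : HasDerivAt (fun u : ℝ => -u) (-1) s := hasDerivAt_neg s
  have hg : HasDerivAt (fun s : ℝ => exp ((-s) • Aᵀ)) (-(Aᵀ * exp ((-s) • Aᵀ))) s := by
    have h1 := hasDerivAt_exp_smul_const' (𝕂 := ℝ) Aᵀ (-s)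
    have h2 : HasDerivAt (fun s : ℝ => exp ((-s) • Aᵀ))
        ((-1 : ℝ) • (Aᵀ * exp ((-s) • Aᵀ))) s := h1.scomp s hneg
    simpa using h2
  have hh : HasDerivAt (fun s : ℝ => exp ((-s) • A)) (-(exp ((-s) • A) * A)) s := by
    have h1 := hasDerivAt_exp_smul_const (𝕂 := ℝ) A (-s)
    have h2 : HasDerivAt (fun s : ℝ => exp ((-s) • A))
        ((-1 : ℝ) • (exp ((-s) • A) * A)) s := h1.scomp s hneg
    simpa using h2
  have hM : HasDerivAt (fun s => Mf A C s)
      (-(Aᵀ * Mf A C s + Mf A C s * A)) s := by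
    have := (hg.mul_const (Cᵀ * C)).fun_mul hh
    refine this.congr_deriv ?_
    simp only [Mf]
    noncomm_ring
  -- project to entry
  let L : Matrix (Fin n) (Fin n) ℝ →ₗ[ℝ] ℝ :=
    { toFun := fun m => m i j, map_add' := fun _ _ => rfl, map_smul' := fun _ _ => rfl }
  have := (L.toContinuousLinearMap.hasFDerivAt (x := Mf A C s)).comp_hasDerivAt s hM
  exact this

lemma cont_Mf_entry (A : Matrix (Fin n) (Fin n) ℝ) (C : Matrix (Fin q) (Fin n) ℝ) (i j : Fin n) :
    Continuous fun s => Mf A C s i j :=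
  continuous_iff_continuousAt.2 fun s => (hasDerivAt_Mf_entry A C s i j).continuousAt

lemma lyap_id (A : Matrix (Fin n) (Fin n) ℝ) (C : Matrix (Fin q) (Fin n) ℝ)
    (W : ℝ → Matrix (Fin n) (Fin n) ℝ)
    (hWe : ∀ t (i j : Fin n), W t i j = ∫ s in (0:ℝ)..t, Mf A C s i j) (s : ℝ) :
    Aᵀ * W s + W s * A = Cᵀ * C - Mf A C s := by
  have hWd : ∀ (k j : Fin n) (t : ℝ), HasDerivAt (fun t => W t k j) (Mf A C t k j) t := by
    intro k j t
    have e : (fun t => W t k j) = fun t => ∫ s in (0:ℝ)..t, Mf A C s k j :=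
      funext fun t => hWe t k j
    rw [e]
    exact intervalIntegral.integral_hasDerivAt_right
      ((cont_Mf_entry A C k j).intervalIntegrable _ _)
      ((cont_Mf_entry A C k j).stronglyMeasurableAtFilter _ _)
      (cont_Mf_entry A C k j).continuousAt
  have key : ∀ (i j : Fin n) (t : ℝ),
      HasDerivAt (fun t => (Aᵀ * W t + W t * A + Mf A C t) i j) 0 t := by
    intro i j t
    have e : (fun t => (Aᵀ * W t + W t * A + Mf A C t) i j)
        = fun t => (∑ k, Aᵀ i k * W t k j) + (∑ k, W t i k * A k j) + Mf A C t i j := by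
      funext t; simp [Matrix.add_apply, Matrix.mul_apply]
    rw [e]
    have h1 : HasDerivAt (fun t => ∑ k, Aᵀ i k * W t k j) (∑ k, Aᵀ i k * Mf A C t k j) t :=
      HasDerivAt.fun_sum fun k _ => (hWd k j t).const_mul _
    have h2 : HasDerivAt (fun t => ∑ k, W t i k * A k j) (∑ k, Mf A C t i k * A k j) t :=
      HasDerivAt.fun_sum fun k _ => (hWd i k t).mul_const _
    have h3 := hasDerivAt_Mf_entry A C t i j
    have h4 := (h1.fun_add h2).fun_add h3
    refine h4.congr_deriv ?_
    simp [Matrix.add_apply, Matrix.mul_apply, Matrix.neg_apply]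
  have const : ∀ i j, (Aᵀ * W s + W s * A + Mf A C s) i j
      = (Aᵀ * W 0 + W 0 * A + Mf A C 0) i j := fun i j =>
    is_const_of_deriv_eq_zero (fun t => (key i j t).differentiableAt)
      (fun t => (key i j t).deriv) s 0
  have hW0 : W 0 = 0 := by
    ext i j; rw [hWe]; simp
  have hM0 : Mf A C 0 = Cᵀ * C := by
    simp [Mf]
  ext i j
  have h5 := const i j
  rw [hW0, hM0] at h5
  simp only [Matrix.add_apply, Matrix.sub_apply, Matrix.mul_apply, Matrix.zero_apply,
    mul_zero, zero_mul, Finset.sum_const_zero, zero_add, add_zero] at h5 ⊢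
  linarith

lemma Mf_posSemidef (A : Matrix (Fin n) (Fin n) ℝ) (C : Matrix (Fin q) (Fin n) ℝ) (s : ℝ) :
    (Mf A C s).PosSemidef := by
  have he : Mf A C s = (C * exp ((-s) • A))ᵀ * (C * exp ((-s) • A)) := by
    rw [Matrix.transpose_mul, ← Matrix.exp_transpose, Matrix.transpose_smul]
    simp only [Mf, neg_smul]
    simp only [Matrix.mul_assoc]
  rw [he]
  have := Matrix.posSemidef_conjTranspose_mul_self (C * exp ((-s) • A))
  rwa [Matrix.conjTranspose_eq_transpose_of_trivial] at this

lemma posSemidef_smul {M : Matrix (Fin n) (Fin n) ℝ} (h : M.PosSemidef) {c : ℝ} (hc : 0 ≤ c) :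
    (c • M).PosSemidef := by
  refine Matrix.PosSemidef.of_dotProduct_mulVec_nonneg ?_ fun x => ?_
  · rw [Matrix.IsHermitian, Matrix.conjTranspose_smul, star_trivial, h.1]
  · rw [Matrix.smul_mulVec, dotProduct_smul, smul_eq_mul]
    exact mul_nonneg hc (h.dotProduct_mulVec_nonneg x)

lemma posDef_smul {M : Matrix (Fin n) (Fin n) ℝ} (h : M.PosDef) {c : ℝ} (hc : 0 < c) :
    (c • M).PosDef := by
  refine Matrix.PosDef.of_dotProduct_mulVec_pos (posSemidef_smul h.posSemidef hc.le).1 fun x hx => ?_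
  rw [Matrix.smul_mulVec, dotProduct_smul, smul_eq_mul]
  exact mul_pos hc (h.dotProduct_mulVec_pos hx)

lemma exists_eps_sub_posSemidef {M : Matrix (Fin n) (Fin n) ℝ} (hM : M.PosDef) :
    ∃ ε : ℝ, 0 < ε ∧ (M - ε • 1).PosSemidef := by
  rcases Nat.eq_zero_or_pos n with h0 | hn
  · subst h0
    refine ⟨1, one_pos, ⟨?_, fun x => ?_⟩⟩
    · ext i j; exact i.elim0
    · simp [Subsingleton.elim x 0]
  · haveI : Nonempty (Fin n) := ⟨⟨0, hn⟩⟩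
    set ε := Finset.univ.inf' Finset.univ_nonempty hM.1.eigenvalues with hε
    refine ⟨ε, ?_, ?_⟩
    · rw [hε, Finset.lt_inf'_iff]
      exact fun i _ => hM.eigenvalues_pos i
    · have hspec := hM.1.spectral_theorem
      rw [Unitary.conjStarAlgAut_apply] at hspec
      set U : Matrix (Fin n) (Fin n) ℝ := (Matrix.IsHermitian.eigenvectorUnitary hM.1 : Matrix (Fin n) (Fin n) ℝ) with hU
      have hUU : U * star U = 1 := (Matrix.mem_unitaryGroup_iff).mp
        (Matrix.IsHermitian.eigenvectorUnitary hM.1).2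
      have h1 : (1 : Matrix (Fin n) (Fin n) ℝ) = U * 1 * star U := by
        rw [mul_one, hUU]
      have hdiag : M - ε • 1
          = U * (Matrix.diagonal (fun i => hM.1.eigenvalues i - ε)) * star U := by
        calc M - ε • 1
            = U * Matrix.diagonal (RCLike.ofReal ∘ hM.1.eigenvalues) * star U
              - ε • (U * 1 * star U) := by rw [← hspec, ← h1]
          _ = U * (Matrix.diagonal (RCLike.ofReal ∘ hM.1.eigenvalues) - ε • 1) * star U := by
              simp only [Matrix.mul_sub, Matrix.sub_mul, Matrix.smul_mul, Matrix.mul_smul,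
                Matrix.mul_one]
          _ = U * (Matrix.diagonal (fun i => hM.1.eigenvalues i - ε)) * star U := by
              congr 1
              congr 1
              ext i j
              rcases eq_or_ne i j with rfl | hij
              · simp [Matrix.diagonal_apply_eq]
              · simp [Matrix.diagonal_apply_ne _ hij, Matrix.one_apply_ne hij]
      rw [hdiag, Matrix.star_eq_conjTranspose]
      refine Matrix.PosSemidef.mul_mul_conjTranspose_same ?_ U
      exact Matrix.PosSemidef.diagonal fun i =>
        sub_nonneg.2 (Finset.inf'_le _ (Finset.mem_univ i))

lemma quadform_integral (f : ℝ → Matrix (Fin n) (Fin n) ℝ)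
    (hf : ∀ i j, Continuous fun s => f s i j) (a b : ℝ) (x : Fin n → ℝ) :
    x ⬝ᵥ ((Matrix.of fun i j => ∫ s in a..b, f s i j) *ᵥ x)
      = ∫ s in a..b, x ⬝ᵥ (f s *ᵥ x) := by
  simp only [dotProduct, Matrix.mulVec, Matrix.of_apply]
  have h1 : ∀ i, (∑ j, (∫ s in a..b, f s i j) * x j)
      = ∫ s in a..b, ∑ j, f s i j * x j := by
    intro i
    rw [intervalIntegral.integral_finset_sum
      (fun j _ => ((hf i j).fun_mul continuous_const).intervalIntegrable a b)]
    exact Finset.sum_congr rfl fun j _ => (intervalIntegral.integral_mul_const _ _).symm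
  have hc : ∀ i, Continuous fun s => x i * ∑ j, f s i j * x j := fun i =>
    continuous_const.mul (continuous_finset_sum _ fun j _ => (hf i j).mul continuous_const)
  calc ∑ i, x i * ∑ j, (∫ s in a..b, f s i j) * x j
      = ∑ i, ∫ s in a..b, x i * ∑ j, f s i j * x j := by
        refine Finset.sum_congr rfl fun i _ => ?_
        rw [h1, ← intervalIntegral.integral_const_mul]
    _ = ∫ s in a..b, ∑ i, x i * ∑ j, f s i j * x j :=
        (intervalIntegral.integral_finset_sum
          (fun i _ => (hc i).intervalIntegrable a b)).symm

/-- If `(A, C)` is detectable in the sense that the observability Gramian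
`W(t) = ∫₀ᵗ e^{-Aᵀs} Cᵀ C e^{-As} ds` is positive definite for some `t > 0`,
then there is a symmetric positive definite `P` and `ε > 0` with
`P A + Aᵀ P - 2 Cᵀ C ≤ -ε I`. -/
theorem detectable_lyapunov_inequality
    {n q : ℕ} (A : Matrix (Fin n) (Fin n) ℝ) (C : Matrix (Fin q) (Fin n) ℝ)
    (W : ℝ → Matrix (Fin n) (Fin n) ℝ)
    (hW : ∀ t : ℝ, W t = Matrix.of fun i j =>
      ∫ s in (0:ℝ)..t,
        (NormedSpace.exp ((-s) • Aᵀ) * (Cᵀ * C) * NormedSpace.exp ((-s) • A)) i j)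
    (hdet : ∃ t : ℝ, 0 < t ∧ (W t).PosDef) :
    ∃ (P : Matrix (Fin n) (Fin n) ℝ) (ε : ℝ), P.IsSymm ∧ P.PosDef ∧ 0 < ε ∧
      ((-ε) • (1 : Matrix (Fin n) (Fin n) ℝ)
        - (P * A + Aᵀ * P - (2:ℝ) • (Cᵀ * C))).PosSemidef := by
  obtain ⟨t, ht, hWt⟩ := hdet
  have hWe : ∀ t (i j : Fin n), W t i j = ∫ s in (0:ℝ)..t, Mf A C s i j := by
    intro t i j; rw [hW t]; rfl
  have hWof : ∀ s, W s = Matrix.of fun i j => ∫ τ in (0:ℝ)..s, Mf A C τ i j := by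
    intro s; ext i j; exact hWe s i j
  have hid := lyap_id A C W hWe
  have hWcont : ∀ i j : Fin n, Continuous fun s => W s i j := by
    intro i j
    have e : (fun s => W s i j) = fun s => ∫ τ in (0:ℝ)..s, Mf A C τ i j :=
      funext fun s => hWe s i j
    rw [e]
    refine continuous_iff_continuousAt.2 fun s => ?_
    exact (intervalIntegral.integral_hasDerivAt_right
      ((cont_Mf_entry A C i j).intervalIntegrable _ _)
      ((cont_Mf_entry A C i j).stronglyMeasurableAtFilter _ _)
      (cont_Mf_entry A C i j).continuousAt).continuousAt
  have hMfsymm : ∀ (s : ℝ) (i j : Fin n), Mf A C s i j = Mf A C s j i := by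
    intro s i j
    have h := (Mf_posSemidef A C s).1
    have := congrFun (congrFun h i) j
    rw [Matrix.conjTranspose_apply, star_trivial] at this
    exact this.symm
  have hWsymm : ∀ (s : ℝ) (i j : Fin n), W s i j = W s j i := by
    intro s i j
    rw [hWe, hWe]
    exact intervalIntegral.integral_congr fun τ _ => hMfsymm τ i j
  set K : Matrix (Fin n) (Fin n) ℝ := Cᵀ * C with hK
  set V : Matrix (Fin n) (Fin n) ℝ := Matrix.of fun i j => ∫ s in (0:ℝ)..t, W s i j with hV
  -- the integrated Lyapunov identity
  have hVid : Aᵀ * V + V * A = t • K - W t := by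
    ext i j
    simp only [Matrix.add_apply, Matrix.mul_apply, hV, Matrix.of_apply]
    have h1 : ∑ k, Aᵀ i k * (∫ s in (0:ℝ)..t, W s k j)
        = ∫ s in (0:ℝ)..t, ∑ k, Aᵀ i k * W s k j := by
      rw [intervalIntegral.integral_finset_sum
        (fun k _ => (continuous_const.fun_mul (hWcont k j)).intervalIntegrable 0 t)]
      exact Finset.sum_congr rfl fun k _ => (intervalIntegral.integral_const_mul _ _).symm
    have h2 : ∑ k, (∫ s in (0:ℝ)..t, W s i k) * A k j
        = ∫ s in (0:ℝ)..t, ∑ k, W s i k * A k j := by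
      rw [intervalIntegral.integral_finset_sum
        (fun k _ => ((hWcont i k).fun_mul continuous_const).intervalIntegrable 0 t)]
      exact Finset.sum_congr rfl fun k _ => (intervalIntegral.integral_mul_const _ _).symm
    rw [h1, h2, ← intervalIntegral.integral_add
      ((continuous_finset_sum _ fun k _ => continuous_const.fun_mul (hWcont k j)).intervalIntegrable 0 t)
      ((continuous_finset_sum _ fun k _ => (hWcont i k).fun_mul continuous_const).intervalIntegrable 0 t)]
    have h3 : ∀ s : ℝ, (∑ k, Aᵀ i k * W s k j) + ∑ k, W s i k * A k j
        = K i j - Mf A C s i j := by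
      intro s
      have h := congrFun (congrFun (hid s) i) j
      simpa [Matrix.add_apply, Matrix.mul_apply, Matrix.sub_apply] using h
    rw [intervalIntegral.integral_congr fun s _ => h3 s,
      intervalIntegral.integral_sub (intervalIntegrable_const)
        ((cont_Mf_entry A C i j).intervalIntegrable 0 t),
      intervalIntegral.integral_const]
    rw [← hWe t i j]
    simp [Matrix.sub_apply, Matrix.smul_apply, smul_eq_mul]
  set c : ℝ := 2 / (t + 1) with hc
  have hcpos : 0 < c := by positivity
  have hc2 : c * (t + 1) = 2 := div_mul_cancel₀ 2 (by linarith)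
  set P : Matrix (Fin n) (Fin n) ℝ := c • (V + W t) with hP
  have h4 : Aᵀ * (V + W t) + (V + W t) * A = (t + 1) • K - (W t + Mf A C t) := by
    calc Aᵀ * (V + W t) + (V + W t) * A
        = (Aᵀ * V + V * A) + (Aᵀ * W t + W t * A) := by
          rw [Matrix.mul_add, Matrix.add_mul]; abel
      _ = (t • K - W t) + (K - Mf A C t) := by rw [hVid, hid t]
      _ = (t + 1) • K - (W t + Mf A C t) := by rw [add_smul, one_smul]; abel
  have hPA : P * A + Aᵀ * P = (2:ℝ) • K - c • (W t + Mf A C t) := by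
    calc P * A + Aᵀ * P
        = c • (Aᵀ * (V + W t) + (V + W t) * A) := by
          rw [hP, Matrix.smul_mul, Matrix.mul_smul, smul_add]; abel
      _ = c • ((t + 1) • K - (W t + Mf A C t)) := by rw [h4]
      _ = (2:ℝ) • K - c • (W t + Mf A C t) := by rw [smul_sub, smul_smul, hc2]
  -- positivity facts
  have hVpsd : V.PosSemidef := by
    refine Matrix.PosSemidef.of_dotProduct_mulVec_nonneg ?_ ?_
    · ext i j
      rw [Matrix.conjTranspose_apply, star_trivial, hV]
      simp only [Matrix.of_apply]
      exact intervalIntegral.integral_congr fun s _ => hWsymm s j i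
    · intro x
      rw [star_trivial, hV, quadform_integral W hWcont 0 t x]
      refine intervalIntegral.integral_nonneg ht.le fun s hs => ?_
      rw [hWof s, quadform_integral (Mf A C) (cont_Mf_entry A C) 0 s x]
      refine intervalIntegral.integral_nonneg hs.1 fun τ _ => ?_
      have h := (Mf_posSemidef A C τ).dotProduct_mulVec_nonneg x
      rwa [star_trivial] at h
  have hPpd : P.PosDef := posDef_smul (Matrix.PosDef.posSemidef_add hVpsd hWt) hcpos
  obtain ⟨ε, hεpos, hεsub⟩ := exists_eps_sub_posSemidef (posDef_smul hWt hcpos)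
  refine ⟨P, ε, ?_, hPpd, hεpos, ?_⟩
  · show Pᵀ = P
    rw [← Matrix.conjTranspose_eq_transpose_of_trivial]
    exact hPpd.1
  · have heq : (-ε) • (1 : Matrix (Fin n) (Fin n) ℝ) - (P * A + Aᵀ * P - (2:ℝ) • K)
        = (c • W t - ε • 1) + c • Mf A C t := by
      rw [hPA, smul_add, neg_smul]
      abel
    rw [heq]
    exact hεsub.add (posSemidef_smul (Mf_posSemidef A C t) hcpos.le)
end

section
/- Let A, B be matrices such that there exist a symmetric positive definite P and ε > 0 with PA + AᵀP − 2BBᵀ ≤ −ε I, and let L be a symmetric N×N matrix with nonnegative off-diagonal entries, zero row sums, rank N−1, and nonzero eigenvalues λ_2 ≥ … ≥ λ_N (all negative). If c ≥ 1/|λ_2|, then for every k ≥ 2 the matrix P(A + cλ_k P^{-1}BBᵀ) + (A + cλ_k P^{-1}BBᵀ)ᵀP is negative definite. -/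
open Matrix

lemma dp_self_nonneg {m : ℕ} (v : Fin m → ℝ) : 0 ≤ v ⬝ᵥ v :=
  Finset.sum_nonneg fun i _ => mul_self_nonneg (v i)

lemma dp_self_pos {m : ℕ} {v : Fin m → ℝ} (hv : v ≠ 0) : 0 < v ⬝ᵥ v :=
  lt_of_le_of_ne (dp_self_nonneg v)
    (fun h => hv (dotProduct_self_eq_zero.mp h.symm))

/-- Suppose `P A + Aᵀ P - 2 B Bᵀ ≤ -ε I` for a symmetric positive definite `P`
and `ε > 0`, and `L` is a symmetric matrix with nonnegative off-diagonal
entries, zero row sums and rank `N - 1`, whose nonzero eigenvalues are all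
`≤ λ₂ < 0`.  If `c ≥ 1/|λ₂|`, then for every nonzero eigenvalue `μ` of `L`,
the matrix `P (A + c μ P⁻¹ B Bᵀ) + (A + c μ P⁻¹ B Bᵀ)ᵀ P` is negative
definite. -/
theorem lyapunov_negdef_for_coupled_modes
    {n p N : ℕ} (A : Matrix (Fin n) (Fin n) ℝ) (B : Matrix (Fin n) (Fin p) ℝ)
    (P : Matrix (Fin n) (Fin n) ℝ) (hP : P.IsSymm) (hPpos : P.PosDef)
    (ε : ℝ) (hε : 0 < ε)
    (hLMI : ((-ε) • (1 : Matrix (Fin n) (Fin n) ℝ)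
      - (P * A + Aᵀ * P - (2:ℝ) • (B * Bᵀ))).PosSemidef)
    (L : Matrix (Fin N) (Fin N) ℝ) (hsymm : L.IsSymm)
    (hoff : ∀ i j, i ≠ j → 0 ≤ L i j)
    (hrow : ∀ i, ∑ j, L i j = 0)
    (hrank : L.rank = N - 1)
    (lam2 : ℝ) (hlam2neg : lam2 < 0)
    (hlam2eig : ∃ v : Fin N → ℝ, v ≠ 0 ∧ L.mulVec v = lam2 • v)
    (hlam2max : ∀ μ : ℝ, μ ≠ 0 →
      (∃ v : Fin N → ℝ, v ≠ 0 ∧ L.mulVec v = μ • v) → μ ≤ lam2)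
    (c : ℝ) (hc : 1 / |lam2| ≤ c) :
    ∀ μ : ℝ, μ ≠ 0 → (∃ v : Fin N → ℝ, v ≠ 0 ∧ L.mulVec v = μ • v) →
      ∀ x : Fin n → ℝ, x ≠ 0 →
        x ⬝ᵥ (P * (A + (c * μ) • (P⁻¹ * B * Bᵀ))
          + (A + (c * μ) • (P⁻¹ * B * Bᵀ))ᵀ * P).mulVec x < 0 := by
  intro μ hμ hμeig x hx
  have hdet : IsUnit P.det := isUnit_iff_ne_zero.mpr hPpos.det_pos.ne'
  have hPinv : P * P⁻¹ = 1 := Matrix.mul_nonsing_inv P hdet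
  have hPinv' : P⁻¹ * P = 1 := Matrix.nonsing_inv_mul P hdet
  -- algebra: the matrix equals Q + (2cμ+2) • BBᵀ with Q the LMI matrix
  have hK : P * (P⁻¹ * B * Bᵀ) = B * Bᵀ := by
    rw [← Matrix.mul_assoc, ← Matrix.mul_assoc, hPinv, Matrix.one_mul]
  have hKT : (P⁻¹ * B * Bᵀ)ᵀ * P = B * Bᵀ := by
    rw [Matrix.transpose_mul, Matrix.transpose_mul, Matrix.transpose_transpose,
      Matrix.transpose_nonsing_inv, hP.eq]
    rw [Matrix.mul_assoc, Matrix.mul_assoc, hPinv', Matrix.mul_one]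
  set s : ℝ := c * μ with hs
  have hM : P * (A + s • (P⁻¹ * B * Bᵀ)) + (A + s • (P⁻¹ * B * Bᵀ))ᵀ * P
      = (P * A + Aᵀ * P - (2:ℝ) • (B * Bᵀ)) + (2 * s + 2) • (B * Bᵀ) := by
    rw [Matrix.mul_add, Matrix.transpose_add, Matrix.add_mul,
      Matrix.mul_smul, Matrix.transpose_smul, Matrix.smul_mul, hK, hKT]
    module
  rw [hM]
  -- decompose the quadratic form
  have hq : x ⬝ᵥ ((P * A + Aᵀ * P - (2:ℝ) • (B * Bᵀ))
      + (2 * s + 2) • (B * Bᵀ)).mulVec x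
      = x ⬝ᵥ (P * A + Aᵀ * P - (2:ℝ) • (B * Bᵀ)).mulVec x
        + (2 * s + 2) * (x ⬝ᵥ (B * Bᵀ).mulVec x) := by
    rw [Matrix.add_mulVec, dotProduct_add, Matrix.smul_mulVec,
      dotProduct_smul, smul_eq_mul]
  rw [hq]
  -- LMI bound
  have hLMIx := hLMI.dotProduct_mulVec_nonneg x
  have hQle : x ⬝ᵥ (P * A + Aᵀ * P - (2:ℝ) • (B * Bᵀ)).mulVec x
      ≤ -ε * (x ⬝ᵥ x) := by
    have : (0:ℝ) ≤ x ⬝ᵥ (((-ε) • (1 : Matrix (Fin n) (Fin n) ℝ)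
        - (P * A + Aᵀ * P - (2:ℝ) • (B * Bᵀ))).mulVec x) := by
      simpa using hLMIx
    rw [Matrix.sub_mulVec, dotProduct_sub, Matrix.smul_mulVec,
      Matrix.one_mulVec, dotProduct_smul, smul_eq_mul] at this
    linarith
  -- B Bᵀ quadratic form is nonnegative
  have hBB : 0 ≤ x ⬝ᵥ (B * Bᵀ).mulVec x := by
    rw [← Matrix.mulVec_mulVec, dotProduct_mulVec, ← Matrix.mulVec_transpose]
    exact dp_self_nonneg _
  -- s ≤ -1
  have habs : |lam2| = -lam2 := abs_of_neg hlam2neg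
  have hμle : μ ≤ lam2 := hlam2max μ hμ hμeig
  have hc' : 1 ≤ c * (-lam2) := by
    rw [habs, div_le_iff₀ (by linarith)] at hc
    linarith
  have hcpos : 0 < c := by nlinarith
  have hsle : s ≤ -1 := by
    have : c * μ ≤ c * lam2 := by nlinarith
    nlinarith
  have hxx : 0 < x ⬝ᵥ x := dp_self_pos hx
  nlinarith [mul_nonpos_of_nonpos_of_nonneg (by linarith : 2 * s + 2 ≤ 0) hBB]
end
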